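/- The Cesàro operator C on H² has empty point spectrum: if f ∈ H² satisfies Cf = λf for some complex λ, then f = 0. -/
import Mathlib

theorem cesaro_point_spectrum_empty (a : lp (fun _ : ℕ => ℂ) 2) (lam : ℂ)
    (h : ∀ n : ℕ,
      (∑ k ∈ Finset.range (n + 1), (a : ∀ _ : ℕ, ℂ) k) / ((n : ℂ) + 1) =
        lam * (a : ∀ _ : ℕ, ℂ) n) :
    a = 0 := by
  set b : ℕ → ℂ := (a : ∀ _ : ℕ, ℂ) with hb
  have h' : ∀ n, ∑ k ∈ Finset.range (n + 1), b k = lam * ((n : ℂ) + 1) * b n := by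
    intro n
    have hn : ((n : ℂ) + 1) ≠ 0 := Nat.cast_add_one_ne_zero n
    have := (div_eq_iff hn).mp (h n)
    linear_combination this
  have h0 : b 0 = lam * b 0 := by
    have := h' 0
    simpa using this
  have hrec : ∀ n : ℕ, (lam * ((n : ℂ) + 2) - 1) * b (n + 1) = lam * ((n : ℂ) + 1) * b n := by
    intro n
    have h1 := h' (n + 1)
    have h2 := h' n
    rw [Finset.sum_range_succ] at h1
    push_cast at h1
    linear_combination h2 - h1
  -- enough to show all coefficients vanish
  suffices hz : ∀ n, b n = 0 by
    apply lp.ext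
    funext n
    simpa using hz n
  by_cases hcase : ∃ m : ℕ, lam * ((m : ℂ) + 1) = 1
  · obtain ⟨m, hm⟩ := hcase
    have hlam : lam ≠ 0 := by
      intro h0'
      rw [h0'] at hm; simp at hm
    have huniq : ∀ k : ℕ, lam * ((k : ℂ) + 1) = 1 → k = m := by
      intro k hk
      have h1 : lam * ((k : ℂ) + 1) = lam * ((m : ℂ) + 1) := by rw [hk, hm]
      have h2 : ((k : ℂ) + 1) = ((m : ℂ) + 1) := mul_left_cancel₀ hlam h1
      have h3 : (k : ℂ) = (m : ℂ) := by linear_combination h2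
      exact_mod_cast h3
    -- coefficients before m vanish
    have hlow : ∀ n, n < m → b n = 0 := by
      intro n
      induction n with
      | zero =>
        intro hn
        have h1 : lam ≠ 1 := by
          intro h1
          have : (0 : ℕ) = m := huniq 0 (by rw [h1]; simp)
          omega
        have h2 : (1 - lam) * b 0 = 0 := by linear_combination h0
        rcases mul_eq_zero.mp h2 with h3 | h3
        · exact absurd (by linear_combination -h3) h1
        · exact h3
      | succ k ih =>
        intro hk
        have hne : lam * ((k : ℂ) + 2) - 1 ≠ 0 := by
          intro he
          have : k + 1 = m := huniq (k + 1) (by push_cast; linear_combination he)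
          omega
        have := hrec k
        rw [ih (by omega), mul_zero] at this
        exact (mul_eq_zero.mp this).resolve_left hne
    -- for n ≥ m, the modulus is nondecreasing
    have hstep : ∀ j : ℕ, ‖b m‖ ≤ ‖b (m + j)‖ := by
      intro j
      induction j with
      | zero => simp
      | succ i ih =>
        refine le_trans ih ?_
        -- (i+1) * b (m+i+1) = (m+i+1) * b (m+i)
        have hr := hrec (m + i)
        have hkey : ((i : ℂ) + 1) * b (m + i + 1) = ((m : ℂ) + (i : ℂ) + 1) * b (m + i) := by
          push_cast at hr
          linear_combination ((m : ℂ) + 1) * hr - ((m : ℂ) + (i : ℂ) + 2) * b (m + i + 1) * hm +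
            ((m : ℂ) + (i : ℂ) + 1) * b (m + i) * hm
        have hnorm : ((i : ℝ) + 1) * ‖b (m + i + 1)‖ = ((m : ℝ) + (i : ℝ) + 1) * ‖b (m + i)‖ := by
          have := congrArg norm hkey
          rw [norm_mul, norm_mul] at this
          have e1 : ‖((i : ℂ) + 1)‖ = (i : ℝ) + 1 := by
            rw [show ((i : ℂ) + 1) = ((i + 1 : ℕ) : ℂ) by push_cast; ring,
              Complex.norm_natCast]; push_cast; ring
          have e2 : ‖((m : ℂ) + (i : ℂ) + 1)‖ = (m : ℝ) + (i : ℝ) + 1 := by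
            rw [show ((m : ℂ) + (i : ℂ) + 1) = ((m + i + 1 : ℕ) : ℂ) by push_cast; ring,
              Complex.norm_natCast]; push_cast; ring
          rw [e1, e2] at this
          exact this
        have hipos : (0 : ℝ) < (i : ℝ) + 1 := by positivity
        have hle : ((i : ℝ) + 1) * ‖b (m + i)‖ ≤ ((i : ℝ) + 1) * ‖b (m + (i + 1))‖ := by
          have : ((i : ℝ) + 1) * ‖b (m + i + 1)‖ ≥ ((i : ℝ) + 1) * ‖b (m + i)‖ := by
            rw [hnorm]
            have : (0 : ℝ) ≤ (m : ℝ) * ‖b (m + i)‖ := by positivity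
            nlinarith [norm_nonneg (b (m + i))]
          simpa [show m + (i + 1) = m + i + 1 from rfl] using this
        exact le_of_mul_le_mul_left hle hipos
    -- square summability forces b m = 0
    have hbm : b m = 0 := by
      have hmem : Memℓp b 2 := lp.memℓp a
      have h2e : (2 : ENNReal).toReal = (2 : ℝ) := by norm_num
      have hsum : Summable fun n => ‖b n‖ ^ (2 : ℝ) := by
        have := hmem.summable (p := 2) (by norm_num)
        rwa [h2e] at this
      have htend : Filter.Tendsto (fun n => ‖b n‖ ^ (2 : ℝ)) Filter.atTop (nhds 0) :=
        hsum.tendsto_atTop_zero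
      have hmono : Filter.Tendsto (fun j : ℕ => m + j) Filter.atTop Filter.atTop :=
        Filter.tendsto_atTop_mono (fun j => Nat.le_add_left j m) Filter.tendsto_id
      have htend' : Filter.Tendsto (fun j => ‖b (m + j)‖ ^ (2 : ℝ))
          Filter.atTop (nhds 0) := htend.comp hmono
      have hle : ‖b m‖ ^ (2 : ℝ) ≤ 0 := by
        refine ge_of_tendsto htend' ?_
        filter_upwards with j
        exact Real.rpow_le_rpow (norm_nonneg _) (hstep j) (by norm_num)
      have hnn : (0 : ℝ) ≤ ‖b m‖ ^ (2 : ℝ) := Real.rpow_nonneg (norm_nonneg _) _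
      have heq0 : ‖b m‖ ^ (2 : ℝ) = 0 := le_antisymm hle hnn
      have hb0 : ‖b m‖ = 0 := by
        by_contra hne
        have hpos : (0 : ℝ) < ‖b m‖ := lt_of_le_of_ne (norm_nonneg _) (Ne.symm hne)
        have := Real.rpow_pos_of_pos hpos (2 : ℝ)
        linarith
      exact norm_eq_zero.mp hb0
    -- coefficients after m vanish
    have hhigh : ∀ j : ℕ, b (m + j) = 0 := by
      intro j
      induction j with
      | zero => simpa using hbm
      | succ i ih =>
        have hr := hrec (m + i)
        rw [show m + (i + 1) = m + i + 1 from rfl]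
        push_cast at hr
        rw [ih] at hr
        have hne : lam * ((m : ℂ) + (i : ℂ) + 2) - 1 ≠ 0 := by
          intro he
          have : m + i + 1 = m := huniq (m + i + 1) (by push_cast; linear_combination he)
          omega
        simp only [mul_zero] at hr
        exact (mul_eq_zero.mp hr).resolve_left hne
    intro n
    rcases lt_or_ge n m with hn | hn
    · exact hlow n hn
    · obtain ⟨j, rfl⟩ := Nat.exists_eq_add_of_le hn
      exact hhigh j
  · push_neg at hcase
    have hz0 : b 0 = 0 := by
      have h1 : lam ≠ 1 := by
        intro h1; exact hcase 0 (by rw [h1]; simp)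
      have h2 : (1 - lam) * b 0 = 0 := by linear_combination h0
      rcases mul_eq_zero.mp h2 with h3 | h3
      · exact absurd (by linear_combination -h3) h1
      · exact h3
    intro n
    induction n with
    | zero => exact hz0
    | succ k ih =>
      have hne : lam * ((k : ℂ) + 2) - 1 ≠ 0 := by
        intro he
        apply hcase (k + 1)
        push_cast
        linear_combination he
      have := hrec k
      rw [ih, mul_zero] at this
      exact (mul_eq_zero.mp this).resolve_left hne
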